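/- Under the hypotheses of the previous iterate-growth bound (‖θ_{t+1} - θ_t‖ ≤ αL(‖θ_t‖ + β) for all t and ατL ≤ 1/4), the drift over a window of length τ satisfies ‖θ_t - θ_{t-τ}‖ ≤ 4αLτ·‖θ_t‖ + 4αLβτ for all t ≥ τ. -/

import Mathlib

/-!
Summing the step bound over a window of length `k` while controlling the intermediate
iterates by induction gives `‖θ (s + k) - θ s‖ ≤ 2αLk (‖θ s‖ + β)` as long as `αLk ≤ 1/2`.
Expressing `‖θ s‖` through `‖θ (s + k)‖` by the triangle inequality and absorbing the drift term
into the left-hand side costs another factor `2`.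
-/

section Drift

variable {E : Type*} [SeminormedAddCommGroup E]

theorem norm_add_sub_le_of_norm_succ_sub_le {x : ℕ → E} {c β : ℝ} (hc : 0 ≤ c) (hβ : 0 ≤ β)
    (hstep : ∀ n, ‖x (n + 1) - x n‖ ≤ c * (‖x n‖ + β)) (s : ℕ) :
    ∀ k : ℕ, c * k ≤ 1 / 2 → ‖x (s + k) - x s‖ ≤ 2 * c * k * (‖x s‖ + β) := by
  intro k
  induction k with
  | zero => intro _; simp
  | succ k ih =>
    intro hk
    push_cast at hk
    have hck : c * k ≤ 1 / 2 := by linarith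
    have hdrift := ih hck
    have hmid : ‖x (s + k)‖ ≤ ‖x s‖ + 2 * c * k * (‖x s‖ + β) := by
      have := norm_sub_norm_le (x (s + k)) (x s)
      linarith
    have hbase : 0 ≤ ‖x s‖ + β := add_nonneg (norm_nonneg _) hβ
    calc ‖x (s + (k + 1)) - x s‖
        ≤ ‖x (s + k + 1) - x (s + k)‖ + ‖x (s + k) - x s‖ := norm_sub_le_norm_sub_add_norm_sub _ _ _
      _ ≤ c * (‖x s‖ + 2 * c * k * (‖x s‖ + β) + β) + 2 * c * k * (‖x s‖ + β) := by
        gcongr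
        · exact (hstep _).trans (by gcongr)
      _ = (1 + 2 * (c * k)) * c * (‖x s‖ + β) + 2 * c * k * (‖x s‖ + β) := by ring
      _ ≤ 2 * c * (k + 1 : ℕ) * (‖x s‖ + β) := by
        push_cast
        nlinarith [mul_nonneg hc hbase]

theorem norm_sub_le_two_mul_of_norm_sub_le {a b : E} {D β : ℝ} (hD : 0 ≤ D) (hD2 : D ≤ 1 / 2)
    (hβ : 0 ≤ β) (h : ‖a - b‖ ≤ D * (‖b‖ + β)) : ‖a - b‖ ≤ 2 * D * (‖a‖ + β) := by
  have hb : ‖b‖ ≤ ‖a‖ + ‖a - b‖ := by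
    have := norm_sub_norm_le b a
    rw [norm_sub_rev] at this
    linarith
  have hab : (1 - D) * ‖a - b‖ ≤ D * (‖a‖ + β) := by nlinarith
  have hrhs : 0 ≤ D * (‖a‖ + β) := mul_nonneg hD (add_nonneg (norm_nonneg a) hβ)
  nlinarith [norm_nonneg (a - b)]

end Drift

theorem drift_window_bound_general {m : ℕ}
    (L α β : ℝ) (τ : ℕ)
    (hL : 1 ≤ L) (hα : 0 < α) (hβ : 0 ≤ β)
    (θ : ℕ → EuclideanSpace ℝ (Fin m))
    (hstep : ∀ t, ‖θ (t + 1) - θ t‖ ≤ α * L * (‖θ t‖ + β))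
    (hsmall : α * τ * L ≤ 1/4) :
    ∀ t, τ ≤ t → ‖θ t - θ (t - τ)‖ ≤ 4 * α * L * τ * ‖θ t‖ + 4 * α * L * β * τ := by
  intro t ht
  have hc : 0 ≤ α * L := mul_nonneg hα.le (by linarith)
  have hwindow : α * L * τ ≤ 1 / 2 := by linarith
  have hfrom_base := norm_add_sub_le_of_norm_succ_sub_le hc hβ hstep (t - τ) τ hwindow
  rw [Nat.sub_add_cancel ht] at hfrom_base
  have hdrift := norm_sub_le_two_mul_of_norm_sub_le (by positivity) (by linarith) hβ hfrom_base
  linarith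

theorem drift_window_bound {m : ℕ}
    (L σ α β : ℝ) (τ : ℕ)
    (hL : 1 ≤ L) (hσ : 0 ≤ σ) (hα : 0 < α) (hβ : 0 ≤ β) (hτ : 1 ≤ τ)
    (θ : ℕ → EuclideanSpace ℝ (Fin m))
    (hstep : ∀ t, ‖θ (t + 1) - θ t‖ ≤ α * L * (‖θ t‖ + β))
    (hsmall : α * τ * L ≤ 1/4) :
    ∀ t, τ ≤ t → ‖θ t - θ (t - τ)‖ ≤ 4 * α * L * τ * ‖θ t‖ + 4 * α * L * β * τ :=
  drift_window_bound_general L α β τ hL hα hβ θ hstep hsmall
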